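/- arXiv:2603.24608 — 2 statements merged into one kernel-verified Lean document; each statement's English description precedes it below -/
import Mathlib

section
/- Key linear-algebra step of the Weatherall–Manchak proof: Let V be a real vector space with a nondegenerate symmetric bilinear form g of Lorentzian signature, dim V = 4, let w ∈ V be a fixed nonzero vector, and suppose T : V → V is a linear map such that for every unit timelike vector ξ (g(ξ,ξ)=1), T ξ = g(ξ, w)·ξ − w (identifying w with the vector g-dual to ∇Ω). Then w = 0. In other words, the map ξ ↦ g(ξ,w)ξ − w restricted to unit timelike vectors extends to a linear map only if w = 0. -/
/-- The Minkowski bilinear form on ℝ⁴ with signature (+,−,−,−). -/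
def mink (u v : Fin 4 → ℝ) : ℝ :=
  u 0 * v 0 - u 1 * v 1 - u 2 * v 2 - u 3 * v 3

/-- if a linear map T satisfies T ξ = g(ξ,w)·ξ − w on all unit
timelike vectors ξ, then w = 0. -/
theorem weatherall_manchak_linear_step
    (w : Fin 4 → ℝ)
    (T : (Fin 4 → ℝ) →ₗ[ℝ] (Fin 4 → ℝ))
    (hT : ∀ ξ : Fin 4 → ℝ, mink ξ ξ = 1 → T ξ = mink ξ w • ξ - w) :
    w = 0 := by
  have h1 := hT ![1,0,0,0] (by norm_num [mink, Matrix.cons_val_two, Matrix.cons_val_three, Matrix.tail_cons, Matrix.head_cons])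
  have h2 := hT ![-1,0,0,0] (by norm_num [mink, Matrix.cons_val_two, Matrix.cons_val_three, Matrix.tail_cons, Matrix.head_cons])
  have h3 := hT ![5/4,3/4,0,0] (by norm_num [mink, Matrix.cons_val_two, Matrix.cons_val_three, Matrix.tail_cons, Matrix.head_cons])
  have h4 := hT ![5/3,4/3,0,0] (by norm_num [mink, Matrix.cons_val_two, Matrix.cons_val_three, Matrix.tail_cons, Matrix.head_cons])
  have e2 : (![-1,0,0,0] : Fin 4 → ℝ) = -![1,0,0,0] := by
    funext i; fin_cases i <;> norm_num
  have e3 : (![5/4,3/4,0,0] : Fin 4 → ℝ)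
      = (5/4:ℝ) • ![1,0,0,0] + (3/4:ℝ) • ![0,1,0,0] := by
    funext i; fin_cases i <;> norm_num
  have e4 : (![5/3,4/3,0,0] : Fin 4 → ℝ)
      = (5/3:ℝ) • ![1,0,0,0] + (4/3:ℝ) • ![0,1,0,0] := by
    funext i; fin_cases i <;> norm_num
  rw [e2, map_neg] at h2
  rw [e3, map_add, map_smul, map_smul] at h3
  rw [e4, map_add, map_smul, map_smul] at h4
  have q10 := congrFun h1 0
  have q11 := congrFun h1 1
  have q12 := congrFun h1 2
  have q13 := congrFun h1 3
  have q20 := congrFun h2 0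
  have q21 := congrFun h2 1
  have q22 := congrFun h2 2
  have q23 := congrFun h2 3
  have q31 := congrFun h3 1
  have q41 := congrFun h4 1
  simp only [mink, Pi.smul_apply, Pi.sub_apply, Pi.add_apply, Pi.neg_apply,
    Matrix.cons_val_zero, Matrix.cons_val_one, Matrix.head_cons,
    Matrix.cons_val_two, Matrix.cons_val_three, Matrix.tail_cons,
    smul_eq_mul] at q10 q11 q12 q13 q20 q21 q22 q23 q31 q41
  have hw1 : w 1 = 0 := by linarith
  have hw2 : w 2 = 0 := by linarith
  have hw3 : w 3 = 0 := by linarith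
  have hw0 : w 0 = 0 := by linarith
  funext i
  fin_cases i
  · exact hw0
  · exact hw1
  · exact hw2
  · exact hw3
end

section
/- Reverse Cauchy–Schwarz for timelike vectors: in Minkowski space with signature (+,−,−,−), if μ and η are unit timelike vectors in the same time cone, then g(μ,η) ≥ 1, with equality iff μ = η. -/
lemma rcs_aux (a b s X Y : ℝ) (hab : 0 < a * b)
    (hX : a * a = 1 + X) (hY : b * b = 1 + Y)
    (hcs : s ^ 2 ≤ X * Y) (hXpos : 0 ≤ X) (hYpos : 0 ≤ Y) :
    1 + s ≤ a * b := by
  by_cases hs : 1 + s ≤ 0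
  · linarith
  · push_neg at hs
    have habsq : (a * b) ^ 2 = (1 + X) * (1 + Y) := by
      have : (a*b)^2 = (a*a)*(b*b) := by ring
      rw [this, hX, hY]
    have h2s : 2*s ≤ X + Y := by nlinarith [sq_nonneg (X - Y), hcs, hXpos, hYpos]
    have h1 : (1 + s) ^ 2 ≤ (a * b) ^ 2 := by rw [habsq]; nlinarith [hcs, h2s]
    by_contra hcon
    push_neg at hcon
    have h2 := mul_self_lt_mul_self hab.le hcon
    nlinarith [h1, h2]

lemma rcs_eq (s X Y : ℝ) (h : 2*s + s^2 = X + Y + X*Y) (hcs : s^2 ≤ X*Y)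
    (hX : 0 ≤ X) (hY : 0 ≤ Y) : X + Y = 2*s := by
  have hge : 2*s - (X + Y) = X*Y - s^2 := by linarith
  have hle : X + Y ≥ 2*s := by nlinarith [sq_nonneg (X - Y), hcs]
  linarith

set_option maxHeartbeats 1000000 in
/-- reverse Cauchy–Schwarz: unit timelike vectors in the same
time cone satisfy g(μ,η) ≥ 1, with equality iff μ = η. -/
theorem reverse_cauchy_schwarz
    (μ η : Fin 4 → ℝ)
    (hμ : mink μ μ = 1) (hη : mink η η = 1)
    (hcone : 0 < μ 0 * η 0) :
    1 ≤ mink μ η ∧ (mink μ η = 1 ↔ μ = η) := by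
  simp only [mink] at *
  set a := μ 0 with ha; set b := η 0 with hb
  set x1 := μ 1 with hx1; set x2 := μ 2 with hx2; set x3 := μ 3 with hx3
  set y1 := η 1 with hy1; set y2 := η 2 with hy2; set y3 := η 3 with hy3
  have hX : a * a = 1 + (x1^2 + x2^2 + x3^2) := by nlinarith [hμ]
  have hY : b * b = 1 + (y1^2 + y2^2 + y3^2) := by nlinarith [hη]
  have hcs : (x1*y1 + x2*y2 + x3*y3)^2 ≤
      (x1^2 + x2^2 + x3^2) * (y1^2 + y2^2 + y3^2) := by
    nlinarith [sq_nonneg (x1*y2 - x2*y1), sq_nonneg (x1*y3 - x3*y1),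
      sq_nonneg (x2*y3 - x3*y2)]
  have hXpos : 0 ≤ x1^2 + x2^2 + x3^2 := by positivity
  have hYpos : 0 ≤ y1^2 + y2^2 + y3^2 := by positivity
  have hmain' := rcs_aux a b (x1*y1 + x2*y2 + x3*y3) _ _ hcone hX hY hcs hXpos hYpos
  have hmain : 1 ≤ a * b - x1 * y1 - x2 * y2 - x3 * y3 := by linarith
  refine ⟨hmain, ?_, ?_⟩
  · intro heq
    have hs : a * b = 1 + (x1*y1 + x2*y2 + x3*y3) := by linarith
    have hprod : (1 + (x1^2+x2^2+x3^2)) * (1 + (y1^2+y2^2+y3^2)) =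
        (1 + (x1*y1 + x2*y2 + x3*y3))^2 := by
      rw [← hX, ← hY, ← hs]; ring
    have hexp : 2*(x1*y1 + x2*y2 + x3*y3) + (x1*y1 + x2*y2 + x3*y3)^2 =
        (x1^2+x2^2+x3^2) + (y1^2+y2^2+y3^2) +
          (x1^2+x2^2+x3^2)*(y1^2+y2^2+y3^2) := by linarith [hprod]
    have hkey := rcs_eq _ _ _ hexp hcs hXpos hYpos
    have hspat : (x1 - y1)^2 + (x2 - y2)^2 + (x3 - y3)^2 = 0 := by
      have : (x1 - y1)^2 + (x2 - y2)^2 + (x3 - y3)^2 =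
          (x1^2+x2^2+x3^2) + (y1^2+y2^2+y3^2) - 2*(x1*y1 + x2*y2 + x3*y3) := by ring
      rw [this]; linarith
    have h1 : x1 = y1 := by
      have : (x1 - y1)^2 = 0 := by
        linarith [sq_nonneg (x1-y1), sq_nonneg (x2-y2), sq_nonneg (x3-y3)]
      have := pow_eq_zero_iff (n := 2) (by norm_num) |>.mp this
      linarith [this]
    have h2 : x2 = y2 := by
      have : (x2 - y2)^2 = 0 := by
        linarith [sq_nonneg (x1-y1), sq_nonneg (x2-y2), sq_nonneg (x3-y3)]
      have := pow_eq_zero_iff (n := 2) (by norm_num) |>.mp this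
      linarith [this]
    have h3 : x3 = y3 := by
      have : (x3 - y3)^2 = 0 := by
        linarith [sq_nonneg (x1-y1), sq_nonneg (x2-y2), sq_nonneg (x3-y3)]
      have := pow_eq_zero_iff (n := 2) (by norm_num) |>.mp this
      linarith [this]
    have hab : a = b := by
      have hsq2 : a * a = b * b := by rw [hX, hY, h1, h2, h3]
      have h0 : (a - b) * (a + b) = 0 := by linear_combination hsq2
      rcases mul_eq_zero.mp h0 with h0 | h0
      · linarith
      · rcases (mul_pos_iff.mp hcone) with ⟨h', h''⟩ | ⟨h', h''⟩
        · linarith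
        · linarith
    funext i
    fin_cases i
    · show a = b; exact hab
    · show x1 = y1; exact h1
    · show x2 = y2; exact h2
    · show x3 = y3; exact h3
  · intro heq
    subst heq
    simp only [← ha, ← hb, ← hx1, ← hx2, ← hx3, ← hy1, ← hy2, ← hy3] at *
    linarith [hμ]
end
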